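/- arXiv:1906.11967 — 5 statements merged into one kernel-verified Lean document; each statement's English description precedes it below -/
import Mathlib

section
/- Suppose α : (−∞, τ₀] → ℝ is differentiable, α(τ) < 0 for all τ ≤ τ₀, α(τ) → 0 as τ → −∞, and α'(τ) = −8α(τ)² + E(τ) where |E(τ)| = o(α(τ)²) as τ → −∞. Then α(τ) = −(1/(8|τ|))(1 + o(1)) as τ → −∞. -/
open Filter

/-- ODE integration step: if `α < 0`, `α → 0` at `−∞`, and `α' = −8α² + o(α²)`,
then `α(τ) = −(1/(8|τ|))(1 + o(1))` as `τ → −∞`. -/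
theorem stmt4 (τ₀ : ℝ) (α E : ℝ → ℝ)
    (hdiff : ∀ τ ≤ τ₀, DifferentiableAt ℝ α τ)
    (hneg : ∀ τ ≤ τ₀, α τ < 0)
    (hlim : Tendsto α atBot (nhds 0))
    (hode : ∀ τ ≤ τ₀, deriv α τ = -8 * (α τ) ^ 2 + E τ)
    (hE : E =o[atBot] fun τ => (α τ) ^ 2) :
    Tendsto (fun τ => 8 * |τ| * α τ) atBot (nhds (-1)) := by
  set β : ℝ → ℝ := fun τ => (α τ)⁻¹ with hβdef
  have hβderiv : ∀ τ ≤ τ₀, HasDerivAt β (8 - E τ / (α τ) ^ 2) τ := by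
    intro τ hτ
    have hα0 : α τ ≠ 0 := (hneg τ hτ).ne
    have h2 := ((hdiff τ hτ).hasDerivAt).inv hα0
    refine h2.congr_deriv ?_
    rw [hode τ hτ]
    field_simp
    ring
  have hkey : Tendsto (fun τ => β τ / τ) atBot (nhds 8) := by
    rw [Metric.tendsto_nhds]
    intro δ hδ
    set ε := δ / 3 with hεdef
    have hε0 : 0 < ε := by positivity
    have hEsmall : ∀ᶠ τ in atBot, |E τ| ≤ ε * (α τ) ^ 2 := by
      filter_upwards [hE.def hε0] with τ h
      simpa [Real.norm_eq_abs, abs_of_nonneg (sq_nonneg (α τ))] using h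
    obtain ⟨T₁, hT₁⟩ := eventually_atBot.1 hEsmall
    set T := min (min T₁ τ₀) (-1) with hTdef
    have hTτ₀ : T ≤ τ₀ := le_trans (min_le_left _ _) (min_le_right _ _)
    have hTT₁ : T ≤ T₁ := le_trans (min_le_left _ _) (min_le_left _ _)
    have hTneg : T ≤ -1 := min_le_right _ _
    -- MVT bound on Iic T for g = β - 8τ
    have hg : ∀ τ ≤ T, |β τ - 8 * τ - (β T - 8 * T)| ≤ ε * (T - τ) := by
      intro τ hτ
      have hd : ∀ x ∈ Set.Iic T, HasDerivWithinAt (fun x => β x - 8 * x)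
          (-(E x / (α x) ^ 2)) (Set.Iic T) x := by
        intro x hx
        have hx' : x ≤ τ₀ := le_trans hx hTτ₀
        have := (hβderiv x hx').sub ((hasDerivAt_id x).const_mul 8)
        have h8 : (8 : ℝ) - E x / (α x) ^ 2 - 8 * 1 = -(E x / (α x) ^ 2) := by ring
        rw [h8] at this
        exact this.hasDerivWithinAt
      have hbd : ∀ x ∈ Set.Iic T, ‖-(E x / (α x) ^ 2)‖ ≤ ε := by
        intro x hx
        have hx' : x ≤ τ₀ := le_trans hx hTτ₀
        have hα0 : α x ≠ 0 := (hneg x hx').ne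
        have hα2 : (0 : ℝ) < (α x) ^ 2 := by positivity
        have hEx : |E x| ≤ ε * (α x) ^ 2 := hT₁ x (le_trans hx hTT₁)
        rw [norm_neg, Real.norm_eq_abs, abs_div, abs_of_nonneg (sq_nonneg (α x)),
          div_le_iff₀ hα2]
        exact hEx
      have := (convex_Iic T).norm_image_sub_le_of_norm_hasDerivWithin_le hd hbd
        (Set.mem_Iic.2 hτ) (Set.mem_Iic.2 (le_refl T))
      rw [Real.norm_eq_abs, Real.norm_eq_abs, abs_of_nonneg (by linarith : (0:ℝ) ≤ T - τ),
        abs_sub_comm] at this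
      exact this
    set C := |β T - 8 * T| with hCdef
    rw [eventually_atBot]
    refine ⟨min T (-(C / ε) - 1), fun τ hτ => ?_⟩
    have hτT : τ ≤ T := le_trans hτ (min_le_left _ _)
    have hτC : τ ≤ -(C / ε) - 1 := le_trans hτ (min_le_right _ _)
    have hτneg : τ < 0 := lt_of_le_of_lt (le_trans hτT hTneg) (by norm_num)
    have hτ0 : τ ≠ 0 := hτneg.ne
    have h1 : |β τ - 8 * τ| ≤ C + ε * (T - τ) := by
      have := hg τ hτT
      calc |β τ - 8 * τ| = |(β τ - 8 * τ - (β T - 8 * T)) + (β T - 8 * T)| := by ring_nf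
        _ ≤ |β τ - 8 * τ - (β T - 8 * T)| + |β T - 8 * T| := abs_add_le _ _
        _ ≤ ε * (T - τ) + C := by linarith
        _ = C + ε * (T - τ) := by ring
    have habs : |τ| = -τ := abs_of_neg hτneg
    have hne : (0:ℝ) < -τ := by linarith
    have h2 : |β τ / τ - 8| ≤ 2 * ε := by
      have heq : β τ / τ - 8 = (β τ - 8 * τ) / τ := by field_simp
      rw [heq, abs_div, habs, div_le_iff₀ hne]
      have hCτ : C ≤ ε * (-τ) - ε := by
        have : C / ε ≤ -τ - 1 := by linarith
        have := (div_le_iff₀ hε0).1 this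
        linarith [mul_comm ε (-τ - 1), this]
      have hTτ : ε * (T - τ) ≤ ε * (-τ) := by
        have : T - τ ≤ -τ := by linarith
        exact mul_le_mul_of_nonneg_left this hε0.le
      nlinarith
    have : dist (β τ / τ) 8 = |β τ / τ - 8| := Real.dist_eq _ _
    rw [this]
    calc |β τ / τ - 8| ≤ 2 * ε := h2
      _ < δ := by rw [hεdef]; linarith
  -- conclude
  have hinv : Tendsto (fun τ => (β τ / τ)⁻¹) atBot (nhds (8 : ℝ)⁻¹) :=
    hkey.inv₀ (by norm_num)
  have hmul : Tendsto (fun τ => -8 * (β τ / τ)⁻¹) atBot (nhds (-1)) := by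
    have := hinv.const_mul (-8 : ℝ)
    convert this using 2
    norm_num
  refine hmul.congr' ?_
  rw [EventuallyEq, eventually_atBot]
  refine ⟨-1, fun τ hτ => ?_⟩
  have hτneg : τ < 0 := lt_of_le_of_lt hτ (by norm_num)
  have habs : |τ| = -τ := abs_of_neg hτneg
  have : (β τ / τ)⁻¹ = τ * α τ := by
    rw [hβdef]
    simp [div_eq_mul_inv, mul_inv, inv_inv, mul_comm]
  rw [this, habs]
  ring
end

section
/- Let Z₀ : (0,∞) → (0,1] be a smooth positive solution of Z₀ Z₀'' − (1/2)(Z₀')² + (1−Z₀) Z₀'/ρ + 2(1−Z₀) Z₀/ρ² = 0 with Z₀(ρ) = 1 − ρ²/6 + O(ρ⁴) as ρ → 0 and Z₀(ρ) = ρ^{−2} + O(ρ^{−4}) as ρ → ∞, and set Ψ = √Z₀. Then for all ρ > 0, (2/ρ) Ψ'(ρ) = d/dρ ( Ψ'(ρ) + (1/ρ)(Ψ(ρ) − Ψ(ρ)^{−1}) ). -/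
open Filter Set

/-- The divergence-form identity for the Bryant soliton profile: if `Z₀` solves the soliton
ODE with the stated asymptotics and `Ψ = √Z₀`, then for all `ρ > 0`,
`(2/ρ) Ψ'(ρ) = d/dρ (Ψ'(ρ) + (1/ρ)(Ψ(ρ) − Ψ(ρ)⁻¹))`. -/
theorem stmt5 (Z₀ : ℝ → ℝ)
    (hsmooth : ContDiffOn ℝ (⊤ : ℕ∞) Z₀ (Ioi 0))
    (hpos : ∀ ρ > (0 : ℝ), 0 < Z₀ ρ)
    (hle : ∀ ρ > (0 : ℝ), Z₀ ρ ≤ 1)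
    (hode : ∀ ρ > (0 : ℝ),
      Z₀ ρ * deriv (deriv Z₀) ρ - (deriv Z₀ ρ) ^ 2 / 2
        + (1 - Z₀ ρ) * deriv Z₀ ρ / ρ + 2 * (1 - Z₀ ρ) * Z₀ ρ / ρ ^ 2 = 0)
    (h0 : (fun ρ => Z₀ ρ - (1 - ρ ^ 2 / 6)) =O[nhdsWithin 0 (Ioi 0)] fun ρ => ρ ^ 4)
    (hinf : (fun ρ => Z₀ ρ - ρ ^ (-2 : ℤ)) =O[atTop] fun ρ => ρ ^ (-4 : ℤ)) :
    ∀ ρ > (0 : ℝ),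
      2 / ρ * deriv (fun x => Real.sqrt (Z₀ x)) ρ =
        deriv (fun x => deriv (fun y => Real.sqrt (Z₀ y)) x
          + (1 / x) * (Real.sqrt (Z₀ x) - (Real.sqrt (Z₀ x))⁻¹)) ρ := by
  have hZ' :=
    ((contDiffOn_infty_iff_deriv_of_isOpen isOpen_Ioi).mp (hsmooth.of_le (by simp))).2
  -- pointwise facts on Ioi 0
  have hZat : ∀ x ∈ Ioi (0:ℝ), HasDerivAt Z₀ (deriv Z₀ x) x := fun x hx =>
    ((hsmooth.contDiffAt (isOpen_Ioi.mem_nhds hx)).differentiableAt (by simp)).hasDerivAt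
  have hsqrt : ∀ x ∈ Ioi (0:ℝ),
      HasDerivAt (fun y => Real.sqrt (Z₀ y)) (deriv Z₀ x / (2 * Real.sqrt (Z₀ x))) x :=
    fun x hx => (hZat x hx).sqrt (hpos x hx).ne'
  intro ρ hρ
  have hρ' : ρ ∈ Ioi (0:ℝ) := hρ
  have hρne : ρ ≠ 0 := ne_of_gt hρ
  have hZpos := hpos ρ hρ
  have hspos : 0 < Real.sqrt (Z₀ ρ) := Real.sqrt_pos.mpr hZpos
  have hsne : Real.sqrt (Z₀ ρ) ≠ 0 := hspos.ne'
  set s := Real.sqrt (Z₀ ρ) with hs_def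
  set Z' := deriv Z₀ ρ with hZ'_def
  set Z'' := deriv (deriv Z₀) ρ with hZ''_def
  -- replace deriv of sqrt by explicit formula on a neighborhood
  have heq : (fun x => deriv (fun y => Real.sqrt (Z₀ y)) x
          + (1 / x) * (Real.sqrt (Z₀ x) - (Real.sqrt (Z₀ x))⁻¹))
      =ᶠ[nhds ρ] (fun x => deriv Z₀ x / (2 * Real.sqrt (Z₀ x))
          + (1 / x) * (Real.sqrt (Z₀ x) - (Real.sqrt (Z₀ x))⁻¹)) := by
    filter_upwards [isOpen_Ioi.mem_nhds hρ'] with x hx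
    rw [(hsqrt x hx).deriv]
  rw [heq.deriv_eq]
  -- derivative of the explicit expression
  have hZd : HasDerivAt Z₀ Z' ρ := hZat ρ hρ'
  have hZ'd : HasDerivAt (deriv Z₀) Z'' ρ :=
    ((hZ'.contDiffAt (isOpen_Ioi.mem_nhds hρ')).differentiableAt (by simp)).hasDerivAt
  have hsd : HasDerivAt (fun y => Real.sqrt (Z₀ y)) (Z' / (2 * s)) ρ := hsqrt ρ hρ'
  have h2s : HasDerivAt (fun x => 2 * Real.sqrt (Z₀ x)) (2 * (Z' / (2 * s))) ρ :=
    hsd.const_mul 2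
  have hterm1 : HasDerivAt (fun x => deriv Z₀ x / (2 * Real.sqrt (Z₀ x)))
      ((Z'' * (2 * s) - Z' * (2 * (Z' / (2 * s)))) / (2 * s) ^ 2) ρ := by
    exact hZ'd.div h2s (by positivity)
  have hinv : HasDerivAt (fun x : ℝ => 1 / x) (-(ρ ^ 2)⁻¹) ρ := by
    simpa [one_div] using hasDerivAt_inv hρne
  have hsub : HasDerivAt (fun x => Real.sqrt (Z₀ x) - (Real.sqrt (Z₀ x))⁻¹)
      (Z' / (2 * s) - -(Z' / (2 * s)) / s ^ 2) ρ := hsd.sub (hsd.inv hsne)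
  have hterm2 : HasDerivAt (fun x => (1 / x) * (Real.sqrt (Z₀ x) - (Real.sqrt (Z₀ x))⁻¹))
      (-(ρ ^ 2)⁻¹ * (s - s⁻¹) + (1 / ρ) * (Z' / (2 * s) - -(Z' / (2 * s)) / s ^ 2)) ρ :=
    hinv.mul hsub
  rw [(hterm1.fun_add hterm2).deriv, hsd.deriv]
  -- algebraic identity using the ODE
  have hode' := hode ρ hρ
  rw [← hZ'_def, ← hZ''_def] at hode'
  have hsq : s ^ 2 = Z₀ ρ := Real.sq_sqrt hZpos.le
  have hρ2 : ρ ^ 2 ≠ 0 := pow_ne_zero 2 hρne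
  rw [← hsq] at hode'
  field_simp at hode' ⊢
  linear_combination (-1) * hode'
end

section
/- Fix κ ∈ ℝ and consider the characteristic ODE z'(τ) = (z/2)(1 − κ/|τ|) for τ < 0 together with w'(τ) = w(τ) along characteristics. If w(z₁,τ₁) = −c/|τ₁| at the starting point with z₁ = M/√|τ₁|, then along the characteristic reaching (z,τ) one has w(z,τ) = −(c z²/M²)(1 + ε(τ)) where ε(τ) → 0 as τ → −∞, provided z stays in a compact subset of (0,2). -/
set_option maxHeartbeats 1000000

open Set

private lemma constOn {f : ℝ → ℝ} {A B : ℝ} (hAB : A ≤ B)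
    (hf : ∀ t ∈ Icc A B, HasDerivAt f 0 t) : f B = f A :=
  constant_of_has_deriv_right_zero
    (fun t ht => (hf t ht).continuousAt.continuousWithinAt)
    (fun t ht => (hf t (Ico_subset_Icc_self ht)).hasDerivWithinAt) B (right_mem_Icc.2 hAB)

private lemma wRep {w : ℝ → ℝ} {A B : ℝ} (hAB : A ≤ B)
    (hw : ∀ t ∈ Icc A B, HasDerivAt w (w t) t) :
    w B * Real.exp (-B) = w A * Real.exp (-A) := by
  apply constOn hAB
  intro t ht
  have he : HasDerivAt (fun t : ℝ => Real.exp (-t)) (-Real.exp (-t)) t := by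
    simpa using (hasDerivAt_neg t).exp
  have h := (hw t ht).mul he
  convert h using 1
  · rfl
  · rfl
  · rfl
  ring

private lemma zRep {z : ℝ → ℝ} {κ A B : ℝ} (hAB : A ≤ B) (hB : B < 0)
    (hz : ∀ t ∈ Icc A B, HasDerivAt z (z t / 2 * (1 - κ / (-t))) t) :
    z B ^ 2 * (Real.exp (-B) * (-B) ^ (-κ)) = z A ^ 2 * (Real.exp (-A) * (-A) ^ (-κ)) := by
  apply constOn hAB
  intro t ht
  have htneg : t < 0 := lt_of_le_of_lt ht.2 hB
  have hpt : (0:ℝ) < -t := by linarith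
  have he : HasDerivAt (fun t : ℝ => Real.exp (-t)) (-Real.exp (-t)) t := by
    simpa using (hasDerivAt_neg t).exp
  have hr : HasDerivAt (fun t : ℝ => (-t) ^ (-κ)) ((-1) * (-κ) * (-t) ^ (-κ - 1)) t := by
    have h := (hasDerivAt_neg t).rpow_const (p := -κ) (Or.inl (ne_of_gt hpt))
    convert h using 1
  have hz2 := (hz t ht).pow 2
  have hprod := hz2.mul (he.mul hr)
  convert hprod using 1
  · rfl
  · rfl
  · rfl
  have hsub : (-t) ^ (-κ - 1) = (-t) ^ (-κ) / (-t) := by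
    rw [Real.rpow_sub hpt, Real.rpow_one]
  rw [hsub]
  simp only [Pi.mul_apply, Pi.pow_apply]
  have ht0 : t ≠ 0 := ne_of_lt htneg
  field_simp
  ring

private lemma mono_sub_log {K s y : ℝ} (hK : 0 < K) (hKs : K ≤ s) (hsy : s ≤ y) :
    s - K * Real.log s ≤ y - K * Real.log y := by
  have hs : 0 < s := lt_of_lt_of_le hK hKs
  have hy : 0 < y := lt_of_lt_of_le hs hsy
  have h1 : Real.log (y / s) ≤ y / s - 1 := Real.log_le_sub_one_of_pos (by positivity)
  have h2 : Real.log (y / s) = Real.log y - Real.log s := Real.log_div (ne_of_gt hy) (ne_of_gt hs)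
  have h3 : K * (Real.log y - Real.log s) ≤ K * (y / s - 1) := by
    rw [← h2]; exact mul_le_mul_of_nonneg_left h1 hK.le
  have h4 : K * (y / s - 1) ≤ y - s := by
    have he : K * (y / s - 1) = (K / s) * (y - s) := by field_simp
    rw [he]
    have h5 : K / s ≤ 1 := (div_le_one hs).2 hKs
    have h6 : K / s * (y - s) ≤ 1 * (y - s) :=
      mul_le_mul_of_nonneg_right h5 (sub_nonneg.2 hsy)
    linarith
  linarith

/-- Method of characteristics: along the characteristic `z' = (z/2)(1 − κ/|t|)` with
`w' = w`, starting from `z(τ₁) = M/√|τ₁|`, `w(τ₁) = −c/|τ₁|`, one has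
`w(τ) = −(c z(τ)²/M²)(1 + o(1))` as `τ → −∞`, as long as `z(τ)` stays in a compact
subset of `(0,2)`. -/
theorem stmt11 (κ c M a b : ℝ) (hc : 0 < c) (hM : 0 < M)
    (ha : 0 < a) (hb : b < 2) (hab : a ≤ b) :
    ∀ η > (0 : ℝ), ∃ τstar < (0 : ℝ), ∀ τ ≤ τstar, ∀ τ₁ ≤ τ, ∀ z w : ℝ → ℝ,
      (∀ t ∈ Icc τ₁ τ, HasDerivAt z (z t / 2 * (1 - κ / |t|)) t) →
      (∀ t ∈ Icc τ₁ τ, HasDerivAt w (w t) t) →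
      z τ₁ = M / Real.sqrt |τ₁| →
      w τ₁ = -c / |τ₁| →
      a ≤ z τ → z τ ≤ b →
      |w τ - (-(c * (z τ) ^ 2 / M ^ 2))| ≤ η * (c * (z τ) ^ 2 / M ^ 2) := by
  intro η hη
  -- constants K and δ
  set K : ℝ := |κ| + 1 with hKdef
  have hK0 : 0 < K := by positivity
  have hK1 : 1 ≤ K := by simp only [hKdef]; linarith [abs_nonneg κ]
  have hKabs : |κ| + 1 ≤ K := le_of_eq hKdef.symm
  set δ : ℝ := Real.log (1 + η) / K with hδdef
  have hlog1η : 0 < Real.log (1 + η) := Real.log_pos (by linarith)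
  have hδ : 0 < δ := div_pos hlog1η hK0
  have hrpow_bound : (1 + δ) ^ |κ| ≤ 1 + η := by
    rw [Real.rpow_def_of_pos (by linarith)]
    have h1 : Real.log (1 + δ) ≤ δ := by
      have := Real.log_le_sub_one_of_pos (show (0:ℝ) < 1 + δ by linarith)
      linarith
    have hl0 : 0 ≤ Real.log (1 + δ) := Real.log_nonneg (by linarith)
    have h2 : Real.log (1 + δ) * |κ| ≤ δ * K :=
      mul_le_mul h1 (by linarith) (abs_nonneg κ) hδ.le
    have h3 : δ * K = Real.log (1 + η) := by
      rw [hδdef]; field_simp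
    calc Real.exp (Real.log (1 + δ) * |κ|) ≤ Real.exp (Real.log (1 + η)) :=
          Real.exp_le_exp.2 (by rw [← h3]; exact h2)
      _ = 1 + η := Real.exp_log (by linarith)
  clear_value δ
  clear hδdef
  set C₀ : ℝ := 2 * Real.log b - 2 * Real.log M with hC₀def
  -- choice of T
  obtain ⟨T, hT1, hTK, hTlog, hTbig⟩ :
      ∃ T : ℝ, 1 ≤ T ∧ K ≤ T ∧ (∀ s, T ≤ s → K * Real.log s ≤ δ / 2 * s) ∧
        (∀ s, T ≤ s → C₀ + K * δ < δ / 2 * s) := by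
    obtain ⟨T₀, hT₀⟩ := Filter.eventually_atTop.1
      (Real.isLittleO_log_id_atTop.def (show (0:ℝ) < δ / (2 * K) by positivity))
    refine ⟨max (max T₀ K) (max 1 (2 * (C₀ + K * δ) / δ + 1)), ?_, ?_, ?_, ?_⟩
    · exact le_trans (le_max_left _ _) (le_max_right _ _)
    · exact le_trans (le_max_right _ _) (le_max_left _ _)
    · intro s hs
      have hs1 : (1:ℝ) ≤ s :=
        le_trans (le_trans (le_max_left _ _) (le_max_right _ _)) hs
      have hs0 : (0:ℝ) < s := by linarith
      have h := hT₀ s (le_trans (le_trans (le_max_left _ _) (le_max_left _ _)) hs)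
      simp only [id, Real.norm_eq_abs, abs_of_nonneg (Real.log_nonneg hs1),
        abs_of_nonneg hs0.le] at h
      calc K * Real.log s ≤ K * (δ / (2 * K) * s) := mul_le_mul_of_nonneg_left h hK0.le
        _ = δ / 2 * s := by field_simp
    · intro s hs
      have h1 : 2 * (C₀ + K * δ) / δ + 1 ≤ s :=
        le_trans (le_trans (le_max_right _ _) (le_max_right _ _)) hs
      have h3 : δ / 2 * (2 * (C₀ + K * δ) / δ + 1) ≤ δ / 2 * s :=
        mul_le_mul_of_nonneg_left h1 (by linarith)
      have h4 : δ / 2 * (2 * (C₀ + K * δ) / δ + 1) = C₀ + K * δ + δ / 2 := by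
        field_simp
      linarith
  clear_value K
  clear hKdef
  refine ⟨-T, by linarith, ?_⟩
  intro τ hτ τ₁ hτ₁ z w hz hw hz1 hw1 hza hzb
  have hb0 : 0 < b := lt_of_lt_of_le ha hab
  set x : ℝ := -τ with hxdef
  set y : ℝ := -τ₁ with hydef
  have hx : T ≤ x := by simp only [hxdef]; linarith
  have hyx : x ≤ y := by simp only [hxdef, hydef]; linarith
  have hx1 : (1:ℝ) ≤ x := le_trans hT1 hx
  have hx0 : (0:ℝ) < x := by linarith
  have hy0 : (0:ℝ) < y := lt_of_lt_of_le hx0 hyx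
  have hτneg : τ < 0 := by rw [hxdef] at hx0; linarith
  have hτ₁neg : τ₁ < 0 := by linarith
  have habsτ₁ : |τ₁| = y := abs_of_neg hτ₁neg
  have hy : T ≤ y := le_trans hx hyx
  -- the w representation
  have hwe := wRep hτ₁ hw
  have hwτ : w τ = -c / y * Real.exp (y - x) := by
    have h2 : Real.exp (-τ) ≠ 0 := Real.exp_ne_zero _
    have h1 : w τ = w τ₁ * Real.exp (-τ₁) / Real.exp (-τ) := by
      rw [eq_div_iff h2]; exact hwe
    rw [h1, hw1, habsτ₁, mul_div_assoc, ← Real.exp_sub]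
  -- the z representation
  have hz' : ∀ t ∈ Icc τ₁ τ, HasDerivAt z (z t / 2 * (1 - κ / (-t))) t := by
    intro t ht
    have habs : |t| = -t := abs_of_neg (lt_of_le_of_lt ht.2 hτneg)
    rw [← habs]; exact hz t ht
  have hze := zRep hτ₁ hτneg hz'
  have hz1sq : z τ₁ ^ 2 = M ^ 2 / y := by
    rw [hz1, habsτ₁, div_pow, Real.sq_sqrt hy0.le]
  set u : ℝ := z τ ^ 2 with hudef
  have hu0 : 0 < u := by
    have : 0 < z τ := lt_of_lt_of_le ha hza
    positivity
  have hu_eq : u * (Real.exp x * x ^ (-κ)) = M ^ 2 / y * (Real.exp y * y ^ (-κ)) := by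
    rw [hudef, ← hz1sq]
    simpa [hxdef, hydef] using hze
  have hub : u ≤ b ^ 2 := by
    rw [hudef]
    exact pow_le_pow_left₀ (le_trans ha.le hza) hzb 2
  clear_value u x y C₀
  clear hwe hze hxdef hydef hudef hz hw hz' hz1 hw1 hz1sq
  have hxκ : (0:ℝ) < x ^ κ := Real.rpow_pos_of_pos hx0 κ
  have hyκ : (0:ℝ) < y ^ κ := Real.rpow_pos_of_pos hy0 κ
  have hEpos : (0:ℝ) < Real.exp x * x ^ (-κ) := by positivity
  have huτ : u = M ^ 2 / y * Real.exp (y - x) * ((x / y) ^ κ) := by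
    have hu2 : u = (M ^ 2 / y * (Real.exp y * y ^ (-κ))) / (Real.exp x * x ^ (-κ)) := by
      rw [eq_div_iff hEpos.ne']; exact hu_eq
    rw [hu2, Real.exp_sub, Real.div_rpow hx0.le hy0.le,
      Real.rpow_neg hx0.le, Real.rpow_neg hy0.le]
    field_simp
  -- key formula : w τ = -(c u / M²) * r
  set r : ℝ := (y / x) ^ κ with hrdef
  have hr0 : (0:ℝ) < r := Real.rpow_pos_of_pos (by positivity) κ
  have hkey : w τ = -(c * u / M ^ 2) * r := by
    rw [hwτ, huτ, hrdef, Real.div_rpow hy0.le hx0.le, Real.div_rpow hx0.le hy0.le]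
    field_simp
  -- log bound
  have hlogx : (0:ℝ) ≤ Real.log x := Real.log_nonneg hx1
  have hlogy : (0:ℝ) ≤ Real.log y := Real.log_nonneg (le_trans hx1 hyx)
  have hlogle : Real.log x ≤ Real.log y := Real.log_le_log hx0 hyx
  have hlog_ineq : y - x ≤ C₀ + K * Real.log y := by
    have h1 : M ^ 2 / y * Real.exp (y - x) * ((x / y) ^ κ) ≤ b ^ 2 := huτ ▸ hub
    have h2 := Real.log_le_log (by positivity) h1
    rw [Real.log_mul (by positivity) (by positivity),
      Real.log_mul (by positivity) (Real.exp_ne_zero _),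
      Real.log_div (by positivity) hy0.ne', Real.log_exp,
      Real.log_rpow (by positivity), Real.log_div hx0.ne' hy0.ne',
      Real.log_pow, Real.log_pow] at h2
    push_cast at h2
    have h3 : -(|κ| * (Real.log y - Real.log x)) ≤ κ * (Real.log x - Real.log y) := by
      have h := mul_le_mul_of_nonneg_right (le_abs_self κ) (sub_nonneg.2 hlogle)
      linarith only [h]
    have h4 : |κ| * (Real.log y - Real.log x) ≤ |κ| * Real.log y :=
      mul_le_mul_of_nonneg_left (by linarith) (abs_nonneg κ)
    have h5 : (|κ| + 1) * Real.log y ≤ K * Real.log y :=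
      mul_le_mul_of_nonneg_right hKabs hlogy
    rw [hC₀def]
    linarith only [h2, h3, h4, h5]
  -- ratio bound
  have hyle : y ≤ (1 + δ) * x := by
    by_contra hcon
    push_neg at hcon
    have hKx : K ≤ x := le_trans hTK hx
    have h1 : (1 + δ) * x - K * Real.log ((1 + δ) * x) ≤ y - K * Real.log y :=
      mono_sub_log hK0 (by have h0 := mul_nonneg hδ.le hx0.le; linarith only [h0, hKx]) hcon.le
    have hlx : Real.log ((1 + δ) * x) = Real.log (1 + δ) + Real.log x :=
      Real.log_mul (by positivity) hx0.ne'
    have hld : Real.log (1 + δ) ≤ δ := by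
      have := Real.log_le_sub_one_of_pos (show (0:ℝ) < 1 + δ by linarith)
      linarith
    have hld2 : K * Real.log (1 + δ) ≤ K * δ := mul_le_mul_of_nonneg_left hld hK0.le
    have hlogxb : K * Real.log x ≤ δ / 2 * x := hTlog x hx
    have hbig : C₀ + K * δ < δ / 2 * x := hTbig x hx
    rw [hlx, mul_add] at h1
    linarith only [h1, hlog_ineq, hld2, hlogxb, hbig]
  have hratio1 : 1 ≤ y / x := (one_le_div hx0).2 hyx
  have hratio2 : y / x ≤ 1 + δ := (div_le_iff₀ hx0).2 (by linarith)
  have hrabs_up : (y / x) ^ |κ| ≤ 1 + η :=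
    le_trans (Real.rpow_le_rpow (by positivity) hratio2 (abs_nonneg κ)) hrpow_bound
  have hr_up : r ≤ 1 + η :=
    le_trans (Real.rpow_le_rpow_of_exponent_le hratio1 (le_abs_self κ)) hrabs_up
  have hr_lo : 1 - η ≤ r := by
    have h1 : (y / x) ^ (-|κ|) ≤ r := Real.rpow_le_rpow_of_exponent_le hratio1 (neg_abs_le κ)
    have h2 : (y / x) ^ (-|κ|) = ((y / x) ^ |κ|)⁻¹ := Real.rpow_neg (by positivity) _
    have h3 : (0:ℝ) < (y / x) ^ |κ| := Real.rpow_pos_of_pos (by positivity) _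
    have h4 : ((1 + η))⁻¹ ≤ ((y / x) ^ |κ|)⁻¹ := by
      apply inv_anti₀ h3 hrabs_up
    have h5 : 1 - η ≤ (1 + η)⁻¹ := by
      rw [inv_eq_one_div, le_div_iff₀ (by linarith : (0:ℝ) < 1 + η)]
      have he : (1 - η) * (1 + η) = 1 - η ^ 2 := by ring
      rw [he]
      have := sq_nonneg η
      linarith
    rw [h2] at h1
    linarith
  clear_value r
  have hP : 0 < c * u / M ^ 2 := by positivity
  rw [hkey]
  have hre : -(c * u / M ^ 2) * r - -(c * u / M ^ 2) = -(c * u / M ^ 2) * (r - 1) := by ring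
  rw [hre, abs_mul, abs_neg, abs_of_pos hP]
  have habs : |r - 1| ≤ η := abs_le.2 ⟨by linarith, by linarith⟩
  calc c * u / M ^ 2 * |r - 1| ≤ c * u / M ^ 2 * η := mul_le_mul_of_nonneg_left habs hP.le
    _ = η * (c * u / M ^ 2) := mul_comm _ _
end

section
/- Suppose Y : (0, √2] → [0,1] is C¹, u ↦ Y(u,τ) satisfies Y(u) ≤ ((1+δ)/(2|τ|))(2u^{−2} − 1) for θ ≤ u ≤ λ. Let u(σ) be a decreasing C¹ function with u_σ(σ)² = Y(u(σ)) and with 2 − u(M)² ≤ (1+δ) M²/(2|τ|) at σ = M. Then for all σ ≥ M with u(σ) ≥ θ, one has 2 − u(σ)² ≤ (1+δ) σ²/(2|τ|), i.e. u(σ) ≥ √(2 − (1+δ)σ²/(2|τ|)) whenever (1+δ)σ² < 4|τ|. -/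
open Set

/-- Intermediate-region integration: from the gradient bound
`u_σ² ≤ ((1+δ)/(2|τ|))(2u⁻² − 1)` on `[M,σ₁]` and `2 − u(M)² ≤ (1+δ)M²/(2|τ|)`,
one gets `2 − u(σ₁)² ≤ (1+δ)σ₁²/(2|τ|)`, i.e.
`u(σ₁) ≥ √(2 − (1+δ)σ₁²/(2|τ|))` whenever `(1+δ)σ₁² < 4|τ|`. -/
theorem stmt12 (θ δ T M σ₁ : ℝ) (hθ : 0 < θ) (hθ2 : θ < Real.sqrt 2)
    (hδ : 0 < δ) (hT : 0 < T) (hM : 0 ≤ M) (hσ₁ : M ≤ σ₁)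
    (u : ℝ → ℝ)
    (hu : ∀ σ ∈ Icc M σ₁, DifferentiableAt ℝ u σ)
    (hdec : ∀ σ ∈ Icc M σ₁, deriv u σ ≤ 0)
    (hrange : ∀ σ ∈ Icc M σ₁, θ ≤ u σ ∧ u σ ≤ Real.sqrt 2)
    (hgrad : ∀ σ ∈ Icc M σ₁,
      (deriv u σ) ^ 2 ≤ (1 + δ) / (2 * T) * (2 / (u σ) ^ 2 - 1))
    (hM2 : 2 - (u M) ^ 2 ≤ (1 + δ) * M ^ 2 / (2 * T)) :
    2 - (u σ₁) ^ 2 ≤ (1 + δ) * σ₁ ^ 2 / (2 * T) ∧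
    ((1 + δ) * σ₁ ^ 2 < 4 * T →
      Real.sqrt (2 - (1 + δ) * σ₁ ^ 2 / (2 * T)) ≤ u σ₁) := by
  set c : ℝ := Real.sqrt ((1 + δ) / (2 * T)) with hc
  have hcT : (0:ℝ) < (1 + δ) / (2 * T) := by positivity
  have hc2 : c ^ 2 = (1 + δ) / (2 * T) := Real.sq_sqrt hcT.le
  have hcpos : 0 < c := Real.sqrt_pos.mpr hcT
  have hMmem : M ∈ Icc M σ₁ := ⟨le_refl M, hσ₁⟩
  have hσ₁mem : σ₁ ∈ Icc M σ₁ := ⟨hσ₁, le_refl σ₁⟩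
  have husq : ∀ σ ∈ Icc M σ₁, (u σ) ^ 2 ≤ 2 := by
    intro σ hσ
    have h := (hrange σ hσ).2
    have h0 : 0 ≤ u σ := (hθ.le.trans (hrange σ hσ).1)
    calc (u σ)^2 ≤ (Real.sqrt 2)^2 := pow_le_pow_left₀ h0 h 2
    _ = 2 := Real.sq_sqrt (by norm_num)
  -- key step: for every ε > 0, √(2 - u σ₁ ^ 2) ≤ c * σ₁ + √ε
  have key : ∀ ε : ℝ, 0 < ε → Real.sqrt (2 - u σ₁ ^ 2) ≤ c * σ₁ + Real.sqrt ε := by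
    intro ε hε
    set v : ℝ → ℝ := fun σ => 2 - u σ ^ 2 + ε with hv
    have hvpos : ∀ σ ∈ Icc M σ₁, 0 < v σ := by
      intro σ hσ; have := husq σ hσ; simp only [hv]; linarith
    set φ : ℝ → ℝ := fun σ => Real.sqrt (v σ) - c * σ with hφ
    have hder : ∀ σ ∈ Icc M σ₁, HasDerivAt φ
        ((-(2 * u σ * deriv u σ)) / (2 * Real.sqrt (v σ)) - c) σ := by
      intro σ hσ
      have hu' := (hu σ hσ).hasDerivAt
      have hv' : HasDerivAt v (-(2 * u σ * deriv u σ)) σ := by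
        have : HasDerivAt (fun s => 2 - u s ^ 2 + ε)
            (0 - (2 : ℕ) * u σ ^ (2 - 1) * deriv u σ + 0) σ :=
          (((hasDerivAt_const σ (2:ℝ)).sub (hu'.pow 2)).add (hasDerivAt_const σ ε))
        convert this using 1
        push_cast; ring
      have hsq : HasDerivAt (fun s => Real.sqrt (v s))
          ((-(2 * u σ * deriv u σ)) / (2 * Real.sqrt (v σ))) σ :=
        hv'.sqrt (hvpos σ hσ).ne'
      have h := hsq.sub ((hasDerivAt_id σ).const_mul c)
      simp at h
      exact h
    have hdernonpos : ∀ σ ∈ Icc M σ₁,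
        (-(2 * u σ * deriv u σ)) / (2 * Real.sqrt (v σ)) - c ≤ 0 := by
      intro σ hσ
      have hvσ := hvpos σ hσ
      have hsv : 0 < Real.sqrt (v σ) := Real.sqrt_pos.mpr hvσ
      have huσ : 0 < u σ := hθ.trans_le (hrange σ hσ).1
      have hd := hdec σ hσ
      have hg := hgrad σ hσ
      have h1 : (u σ * deriv u σ) ^ 2 ≤ (1 + δ) / (2 * T) * v σ := by
        have h2 : (u σ * deriv u σ) ^ 2 ≤ (u σ)^2 * ((1 + δ) / (2 * T) * (2 / (u σ) ^ 2 - 1)) := by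
          have := mul_le_mul_of_nonneg_left hg (sq_nonneg (u σ))
          calc (u σ * deriv u σ)^2 = (u σ)^2 * (deriv u σ)^2 := by ring
          _ ≤ _ := this
        have h3 : (u σ)^2 * ((1 + δ) / (2 * T) * (2 / (u σ) ^ 2 - 1))
            = (1 + δ) / (2 * T) * (2 - (u σ)^2) := by
          field_simp
        have h4 : (1 + δ) / (2 * T) * (2 - (u σ)^2) ≤ (1 + δ) / (2 * T) * v σ := by
          apply mul_le_mul_of_nonneg_left _ hcT.le
          simp only [hv]; linarith
        linarith [h2, h4, h3 ▸ h2]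
      -- hence -(u σ * deriv u σ) ≤ c * √(v σ)
      have h5 : -(u σ * deriv u σ) ≤ c * Real.sqrt (v σ) := by
        have hnn : 0 ≤ -(u σ * deriv u σ) := by
          have := mul_nonpos_of_nonneg_of_nonpos huσ.le hd; linarith
        have hrhs : (c * Real.sqrt (v σ))^2 = (1 + δ) / (2 * T) * v σ := by
          rw [mul_pow, hc2, Real.sq_sqrt hvσ.le]
        have hrnn : 0 ≤ c * Real.sqrt (v σ) := by positivity
        nlinarith [h1, sq_nonneg (-(u σ * deriv u σ) - c * Real.sqrt (v σ)),
          sq_nonneg (-(u σ * deriv u σ) + c * Real.sqrt (v σ))]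
      rw [sub_nonpos, div_le_iff₀ (by positivity)]
      calc -(2 * u σ * deriv u σ) = 2 * (-(u σ * deriv u σ)) := by ring
      _ ≤ 2 * (c * Real.sqrt (v σ)) := by linarith
      _ = c * (2 * Real.sqrt (v σ)) := by ring
    have hanti : AntitoneOn φ (Icc M σ₁) := by
      apply antitoneOn_of_deriv_nonpos (convex_Icc M σ₁)
      · exact fun σ hσ => ((hder σ hσ).continuousAt).continuousWithinAt
      · intro σ hσ
        rw [interior_Icc] at hσ
        exact (hder σ (Ioo_subset_Icc_self hσ)).differentiableAt.differentiableWithinAt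
      · intro σ hσ
        rw [interior_Icc] at hσ
        rw [(hder σ (Ioo_subset_Icc_self hσ)).deriv]
        exact hdernonpos σ (Ioo_subset_Icc_self hσ)
    have hmono := hanti hMmem hσ₁mem hσ₁
    -- φ σ₁ ≤ φ M
    have hφM : Real.sqrt (v M) ≤ c * M + Real.sqrt ε := by
      have h1 : v M ≤ (1 + δ) * M ^ 2 / (2 * T) + ε := by simp only [hv]; linarith
      have h2 : Real.sqrt (v M) ≤ Real.sqrt ((1 + δ) * M ^ 2 / (2 * T) + ε) :=
        Real.sqrt_le_sqrt h1
      have h3 : Real.sqrt ((1 + δ) * M ^ 2 / (2 * T) + ε)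
          ≤ Real.sqrt ((1 + δ) * M ^ 2 / (2 * T)) + Real.sqrt ε := by
        set a : ℝ := (1 + δ) * M ^ 2 / (2 * T) with ha
        have ha0 : 0 ≤ a := by positivity
        have hle : a + ε ≤ (Real.sqrt a + Real.sqrt ε) ^ 2 := by
          nlinarith [Real.sq_sqrt ha0, Real.sq_sqrt hε.le,
            mul_nonneg (Real.sqrt_nonneg a) (Real.sqrt_nonneg ε)]
        calc Real.sqrt (a + ε) ≤ Real.sqrt ((Real.sqrt a + Real.sqrt ε) ^ 2) :=
          Real.sqrt_le_sqrt hle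
        _ = Real.sqrt a + Real.sqrt ε := Real.sqrt_sq (by positivity)
      have h4 : Real.sqrt ((1 + δ) * M ^ 2 / (2 * T)) = c * M := by
        rw [hc, show (1 + δ) * M ^ 2 / (2 * T) = (1 + δ) / (2 * T) * M ^ 2 by ring,
          Real.sqrt_mul hcT.le, Real.sqrt_sq hM]
      linarith
    have hφσ : Real.sqrt (2 - u σ₁ ^ 2) ≤ Real.sqrt (v σ₁) := by
      apply Real.sqrt_le_sqrt; simp only [hv]; linarith
    have : Real.sqrt (v σ₁) - c * σ₁ ≤ Real.sqrt (v M) - c * M := hmono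
    linarith
  have hmain : Real.sqrt (2 - u σ₁ ^ 2) ≤ c * σ₁ := by
    refine le_of_forall_pos_le_add fun η hη => ?_
    have := key (η ^ 2) (by positivity)
    rwa [Real.sqrt_sq hη.le] at this
  have hfinal : 2 - u σ₁ ^ 2 ≤ (1 + δ) * σ₁ ^ 2 / (2 * T) := by
    rcases le_or_gt (2 - u σ₁ ^ 2) 0 with h | h
    · have : 0 ≤ (1 + δ) * σ₁ ^ 2 / (2 * T) := by positivity
      linarith
    · have h1 : (Real.sqrt (2 - u σ₁ ^ 2)) ^ 2 ≤ (c * σ₁) ^ 2 :=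
        pow_le_pow_left₀ (Real.sqrt_nonneg _) hmain 2
      rw [Real.sq_sqrt h.le] at h1
      have h2 : (c * σ₁)^2 = (1 + δ) * σ₁ ^ 2 / (2 * T) := by
        rw [mul_pow, hc2]; ring
      linarith
  refine ⟨hfinal, fun _ => ?_⟩
  have h0 : 0 ≤ u σ₁ := hθ.le.trans (hrange σ₁ hσ₁mem).1
  calc Real.sqrt (2 - (1 + δ) * σ₁ ^ 2 / (2 * T)) ≤ Real.sqrt ((u σ₁)^2) :=
    Real.sqrt_le_sqrt (by linarith)
  _ = u σ₁ := Real.sqrt_sq h0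
end

section
/- Let u : [0, σ₊] → [0,∞) be C², concave (u_σσ ≤ 0), with u_σ(0) = 0 and u > 0 on [0,σ₊). Define K₁ = (1−u_σ²)/u², K₀ = −u_σσ/u, and suppose K₀ ≤ K₁ everywhere (equivalently u u_σσ − u_σ² + 1 ≥ 0). Then K₁ is nondecreasing in σ on [0, σ₊), and hence the scalar curvature R = 4K₀ + 2K₁ satisfies R(σ) ≤ 6K₁(σ) ≤ 6 lim_{σ→σ₊} K₁(σ) for all σ ∈ [0,σ₊); i.e. the maximum of R is attained at the tip. -/
open Set Filter

/-- If `u` is concave with `u_σ(0) = 0` and the pinching `u u_σσ − u_σ² + 1 ≥ 0` holds,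
then `K₁ = (1 − u_σ²)/u²` is nondecreasing on `[0, σ₊)`, and the scalar curvature
`R = 4K₀ + 2K₁` satisfies `R(σ) ≤ 6K₁(σ) ≤ 6 lim_{σ→σ₊} K₁`, so the maximum of `R` is
attained at the tip. -/
theorem stmt14 (σp : ℝ) (u : ℝ → ℝ) (hσp : 0 < σp)
    (hu : ContDiff ℝ 2 u)
    (hconc : ∀ σ ∈ Icc (0 : ℝ) σp, deriv (deriv u) σ ≤ 0)
    (hd0 : deriv u 0 = 0)
    (hpos : ∀ σ ∈ Ico (0 : ℝ) σp, 0 < u σ)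
    (hnonneg : ∀ σ ∈ Icc (0 : ℝ) σp, 0 ≤ u σ)
    (hpinch : ∀ σ ∈ Ico (0 : ℝ) σp,
      0 ≤ u σ * deriv (deriv u) σ - (deriv u σ) ^ 2 + 1) :
    MonotoneOn (fun σ => (1 - (deriv u σ) ^ 2) / (u σ) ^ 2) (Ico (0 : ℝ) σp) ∧
    (∀ σ ∈ Ico (0 : ℝ) σp,
      4 * (-(deriv (deriv u) σ) / u σ) + 2 * ((1 - (deriv u σ) ^ 2) / (u σ) ^ 2) ≤
        6 * ((1 - (deriv u σ) ^ 2) / (u σ) ^ 2)) ∧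
    (∀ L : ℝ, Tendsto (fun σ => (1 - (deriv u σ) ^ 2) / (u σ) ^ 2)
        (nhdsWithin σp (Iio σp)) (nhds L) →
      ∀ σ ∈ Ico (0 : ℝ) σp,
        4 * (-(deriv (deriv u) σ) / u σ) + 2 * ((1 - (deriv u σ) ^ 2) / (u σ) ^ 2) ≤
          6 * L) := by
  have hud : Differentiable ℝ u := hu.differentiable (by norm_num)
  have hu1 : ContDiff ℝ 1 (deriv u) := by
    have := (contDiff_succ_iff_deriv (n := 1)).mp (by exact_mod_cast hu)
    exact this.2.2
  have hu1d : Differentiable ℝ (deriv u) := hu1.differentiable (by norm_num)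
  have hu1c : Continuous (deriv u) := hu1d.continuous
  -- deriv u is antitone on Icc 0 σp, hence ≤ 0 there
  have hanti : AntitoneOn (deriv u) (Icc 0 σp) :=
    antitoneOn_of_deriv_nonpos (convex_Icc 0 σp) (hu1c.continuousOn)
      (hu1d.differentiableOn.mono interior_subset)
      (fun x hx => hconc x (interior_subset hx))
  have hdneg : ∀ σ ∈ Icc (0 : ℝ) σp, deriv u σ ≤ 0 := by
    intro σ hσ
    have := hanti ⟨le_rfl, le_of_lt hσp⟩ hσ hσ.1
    simpa [hd0] using this
  -- derivative of K₁
  have hK1deriv : ∀ x ∈ Ico (0 : ℝ) σp,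
      HasDerivAt (fun σ => (1 - (deriv u σ) ^ 2) / (u σ) ^ 2)
        ((-(2 * deriv u x * deriv (deriv u) x) * (u x) ^ 2
          - (1 - (deriv u x) ^ 2) * (2 * u x * deriv u x)) / ((u x) ^ 2) ^ 2) x := by
    intro x hx
    have hxpos := hpos x hx
    have h1 : HasDerivAt u (deriv u x) x := (hud x).hasDerivAt
    have h2 : HasDerivAt (deriv u) (deriv (deriv u) x) x := (hu1d x).hasDerivAt
    have hnum : HasDerivAt (fun σ => 1 - (deriv u σ) ^ 2)
        (-(2 * deriv u x * deriv (deriv u) x)) x := by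
      have := (h2.fun_pow 2).const_sub 1
      refine this.congr_deriv ?_
      ring
    have hden : HasDerivAt (fun σ => (u σ) ^ 2) (2 * u x * deriv u x) x := by
      have := h1.fun_pow 2
      refine this.congr_deriv ?_
      ring
    exact hnum.div hden (pow_ne_zero 2 hxpos.ne')
  -- K₁ is monotone on Ico
  have hmono : MonotoneOn (fun σ => (1 - (deriv u σ) ^ 2) / (u σ) ^ 2) (Ico (0 : ℝ) σp) := by
    apply monotoneOn_of_deriv_nonneg (convex_Ico 0 σp)
    · apply ContinuousOn.div
      · exact (continuous_const.sub (hu1c.pow 2)).continuousOn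
      · exact (hud.continuous.pow 2).continuousOn
      · intro x hx
        exact pow_ne_zero 2 (hpos x hx).ne'
    · intro x hx
      rw [interior_Ico] at hx
      exact ((hK1deriv x (Ioo_subset_Ico_self hx)).differentiableAt).differentiableWithinAt
    · intro x hx
      rw [interior_Ico] at hx
      have hx' : x ∈ Ico (0 : ℝ) σp := Ioo_subset_Ico_self hx
      rw [(hK1deriv x hx').deriv]
      have hxpos := hpos x hx'
      have hp := hpinch x hx'
      have hdx := hdneg x ⟨hx'.1, le_of_lt hx'.2⟩
      apply div_nonneg _ (by positivity)
      nlinarith [mul_nonneg (mul_nonneg (neg_nonneg.mpr hdx) hxpos.le) hp,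
        sq_nonneg (u x), hxpos.le]
  have hRle : ∀ σ ∈ Ico (0 : ℝ) σp,
      4 * (-(deriv (deriv u) σ) / u σ) + 2 * ((1 - (deriv u σ) ^ 2) / (u σ) ^ 2) ≤
        6 * ((1 - (deriv u σ) ^ 2) / (u σ) ^ 2) := by
    intro σ hσ
    have hσpos := hpos σ hσ
    have hp := hpinch σ hσ
    have key : -(deriv (deriv u) σ) / u σ ≤ (1 - (deriv u σ) ^ 2) / (u σ) ^ 2 := by
      rw [div_le_div_iff₀ hσpos (by positivity)]
      nlinarith
    linarith
  refine ⟨hmono, hRle, ?_⟩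
  intro L hL σ hσ
  have hKL : (1 - (deriv u σ) ^ 2) / (u σ) ^ 2 ≤ L := by
    apply ge_of_tendsto hL
    filter_upwards [Ioo_mem_nhdsLT_of_mem (⟨hσ.2, le_rfl⟩ : σp ∈ Ioc σ σp)] with τ hτ
    exact hmono hσ ⟨le_trans hσ.1 hτ.1.le, hτ.2⟩ hτ.1.le
  have := hRle σ hσ
  linarith
end
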